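/- arXiv:2311.00225 — 2 statements merged into one kernel-verified Lean document; each statement's English description precedes it below -/
import Mathlib

section
/- Let h ~ CN(0, σ²), z ~ CN(0, N0) independent, s = sqrt(βP)·h + z, and define the phase-projection estimator ĥ = |h|·s/|s| (which knows the true modulus and takes the phase of s). Then as βP/N0 → 0, E[|ĥ − h|²] → 2σ², whereas the classical MAP/MMSE estimator ĥ₀ = (sqrt(βP)σ²/(N0 + βPσ²))·s satisfies E[|ĥ₀ − h|²] → σ². Hence in the zero-SNR limit the modulus-informed MAP has twice the MSE of the classical estimator. -/
open MeasureTheory ProbabilityTheory Filter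

/-- The circularly symmetric complex Gaussian `CN(0, v)`: real and imaginary parts are
independent `N(0, v/2)`. -/
noncomputable def complexGaussian (v : NNReal) : Measure ℂ :=
  ((gaussianReal 0 (v / 2)).prod (gaussianReal 0 (v / 2))).map
    (fun p : ℝ × ℝ => (p.1 : ℂ) + (p.2 : ℂ) * Complex.I)

/-! As the SNR vanishes, `s → z` pointwise. By dominated convergence the error of `ĥ` tends to
`E‖‖h‖ · z/‖z‖ - h‖²` (the integrands are bounded by `4‖h‖²`), and that of `ĥ₀` to
`E‖h‖² = σ²`, because its gain tends to `0`. Since `‖z/‖z‖‖ = 1`, the first limit equals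
`2 E‖h‖² - 2 Re E[(z/‖z‖) · ‖h‖ h̄]`; by independence the cross term factors through
`E[z/‖z‖]`, which vanishes because `CN(0, N0)` is invariant under `w ↦ -w`. -/

open Topology ComplexConjugate
open scoped NNReal

lemma integral_sq_gaussianReal (μ : ℝ) (v : ℝ≥0) :
    ∫ x, x ^ 2 ∂gaussianReal μ v = μ ^ 2 + v := by
  have h := variance_eq_sub (memLp_id_gaussianReal (μ := μ) (v := v) 2)
  simp only [variance_id_gaussianReal, Pi.pow_apply, id_eq, integral_id_gaussianReal] at h
  linarith

lemma integrable_sq_gaussianReal (μ : ℝ) (v : ℝ≥0) :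
    Integrable (fun x => x ^ 2) (gaussianReal μ v) :=
  (memLp_id_gaussianReal 2).integrable_sq

lemma norm_sq_ofReal_add_ofReal_mul_I (x y : ℝ) :
    ‖(x : ℂ) + y * Complex.I‖ ^ 2 = x ^ 2 + y ^ 2 := by
  rw [Complex.sq_norm, Complex.normSq_add_mul_I]

instance (v : ℝ≥0) : IsProbabilityMeasure (complexGaussian v) :=
  Measure.isProbabilityMeasure_map (by fun_prop)

lemma integrable_norm_sq_complexGaussian (v : ℝ≥0) :
    Integrable (fun w : ℂ => ‖w‖ ^ 2) (complexGaussian v) := by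
  rw [complexGaussian, integrable_map_measure (by fun_prop) (by fun_prop)]
  simp only [Function.comp_def, norm_sq_ofReal_add_ofReal_mul_I]
  exact ((integrable_sq_gaussianReal _ _).comp_fst _).add
    ((integrable_sq_gaussianReal _ _).comp_snd _)

lemma integral_norm_sq_complexGaussian (v : ℝ≥0) :
    ∫ w, ‖w‖ ^ 2 ∂complexGaussian v = v := by
  rw [complexGaussian, integral_map (by fun_prop) (by fun_prop)]
  simp only [norm_sq_ofReal_add_ofReal_mul_I]
  rw [integral_add ((integrable_sq_gaussianReal _ _).comp_fst _)
    ((integrable_sq_gaussianReal _ _).comp_snd _), integral_fun_fst (fun x : ℝ => x ^ 2),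
    integral_fun_snd (fun x : ℝ => x ^ 2), integral_sq_gaussianReal]
  simp only [probReal_univ, one_smul, NNReal.coe_div, NNReal.coe_ofNat]
  ring

instance (v : ℝ≥0) : (complexGaussian v).IsNegInvariant := by
  constructor
  have hcomm : (fun w : ℂ => -w) ∘ (fun p : ℝ × ℝ => (p.1 : ℂ) + (p.2 : ℂ) * Complex.I) =
      (fun p : ℝ × ℝ => (p.1 : ℂ) + (p.2 : ℂ) * Complex.I) ∘
        Prod.map (fun x => -x) (fun x => -x) := by
    funext p
    simp only [Function.comp_apply, Prod.map_fst, Prod.map_snd, Complex.ofReal_neg]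
    ring
  rw [Measure.neg_def, complexGaussian, Measure.map_map (by fun_prop) (by fun_prop), hcomm,
    ← Measure.map_map (by fun_prop) (by fun_prop),
    ← Measure.map_prod_map _ _ (by fun_prop) (by fun_prop), gaussianReal_map_neg, neg_zero]

lemma complexGaussian_singleton_zero {v : ℝ≥0} (hv : v ≠ 0) : complexGaussian v {0} = 0 := by
  rw [complexGaussian, Measure.map_apply (by fun_prop) (measurableSet_singleton 0)]
  refine measure_mono_null (t := {0} ×ˢ Set.univ) (fun p hp => ?_) ?_
  · simpa using congrArg Complex.re hp
  · rw [Measure.prod_prod,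
      gaussianReal_absolutelyContinuous 0 (by simpa using hv) Real.volume_singleton, zero_mul]

lemma Function.Odd.integral_eq_zero {G E : Type*} [MeasurableSpace G] [AddGroup G]
    [MeasurableNeg G] [NormedAddCommGroup E] [NormedSpace ℝ E] {f : G → E} (hf : f.Odd)
    (μ : Measure G) [μ.IsNegInvariant] : ∫ x, f x ∂μ = 0 := by
  have h := integral_neg_eq_self f μ
  rw [funext hf, integral_neg] at h
  have : IsAddTorsionFree E := .of_isTorsionFree ℝ E
  exact neg_eq_self.mp h

lemma integral_div_norm_complexGaussian (v : ℝ≥0) :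
    ∫ w, w / (‖w‖ : ℂ) ∂complexGaussian v = 0 :=
  Function.Odd.integral_eq_zero (fun w => by rw [norm_neg, neg_div]) _

namespace ProbabilityTheory.HasLaw

variable {Ω : Type*} [MeasurableSpace Ω] {μ : Measure Ω} {X : Ω → ℂ} {v : ℝ≥0}

lemma integrable_norm_sq_of_complexGaussian (hX : HasLaw X (complexGaussian v) μ) :
    Integrable (fun ω => ‖X ω‖ ^ 2) μ := by
  have h := integrable_norm_sq_complexGaussian v
  rw [← hX.map_eq] at h
  exact (integrable_map_measure (by fun_prop) hX.aemeasurable).mp h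

lemma integral_norm_sq_of_complexGaussian (hX : HasLaw X (complexGaussian v) μ) :
    ∫ ω, ‖X ω‖ ^ 2 ∂μ = v :=
  (hX.integral_comp (f := fun w : ℂ => ‖w‖ ^ 2) (by fun_prop)).trans
    (integral_norm_sq_complexGaussian v)

lemma integral_div_norm_of_complexGaussian (hX : HasLaw X (complexGaussian v) μ) :
    ∫ ω, X ω / (‖X ω‖ : ℂ) ∂μ = 0 :=
  (hX.integral_comp (f := fun w : ℂ => w / (‖w‖ : ℂ))
    (by fun_prop : Measurable fun w : ℂ => w / (‖w‖ : ℂ)).aestronglyMeasurable).trans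
    (integral_div_norm_complexGaussian v)

lemma ae_ne_zero_of_complexGaussian (hX : HasLaw X (complexGaussian v) μ) (hv : v ≠ 0) :
    ∀ᵐ ω ∂μ, X ω ≠ 0 := by
  refine ae_of_ae_map (p := fun w => w ≠ 0) hX.aemeasurable ?_
  rw [hX.map_eq, ae_iff]
  simpa using complexGaussian_singleton_zero hv

end ProbabilityTheory.HasLaw

lemma norm_div_ofReal_norm_le_one (w : ℂ) : ‖w / (‖w‖ : ℂ)‖ ≤ 1 := by
  rw [norm_div, Complex.norm_real, norm_norm]
  exact div_self_le_one _

lemma norm_div_ofReal_norm {w : ℂ} (hw : w ≠ 0) : ‖w / (‖w‖ : ℂ)‖ = 1 := by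
  rw [norm_div, Complex.norm_real, norm_norm, div_self (norm_ne_zero_iff.mpr hw)]

lemma norm_sq_norm_mul_sub_le {u : ℂ} (hu : ‖u‖ ≤ 1) (c : ℂ) :
    ‖(‖c‖ : ℂ) * u - c‖ ^ 2 ≤ 4 * ‖c‖ ^ 2 := by
  have : ‖(‖c‖ : ℂ) * u - c‖ ≤ 2 * ‖c‖ :=
    calc ‖(‖c‖ : ℂ) * u - c‖ ≤ ‖c‖ * ‖u‖ + ‖c‖ := by
          grw [norm_sub_le, norm_mul, Complex.norm_real, norm_norm]
      _ ≤ ‖c‖ * 1 + ‖c‖ := by gcongr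
      _ = 2 * ‖c‖ := by ring
  calc ‖(‖c‖ : ℂ) * u - c‖ ^ 2 ≤ (2 * ‖c‖) ^ 2 := by gcongr
    _ = 4 * ‖c‖ ^ 2 := by ring

lemma norm_sq_norm_mul_sub {u : ℂ} (hu : ‖u‖ = 1) (c : ℂ) :
    ‖(‖c‖ : ℂ) * u - c‖ ^ 2 = 2 * ‖c‖ ^ 2 - 2 * (u * (‖c‖ * conj c)).re := by
  have hnorm : Complex.normSq ((‖c‖ : ℂ) * u) = ‖c‖ ^ 2 := by
    rw [← Complex.sq_norm, norm_mul, Complex.norm_real, norm_norm, hu, mul_one]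
  rw [Complex.sq_norm, Complex.normSq_sub, hnorm, ← Complex.sq_norm, mul_comm (‖c‖ : ℂ) u,
    mul_assoc]
  ring

lemma norm_sq_mul_mul_add_sub_le {a b : ℂ} (ha : ‖a‖ ≤ 1) (hb : ‖b‖ ≤ 1) (x y : ℂ) :
    ‖a * (b * x + y) - x‖ ^ 2 ≤ 8 * ‖x‖ ^ 2 + 2 * ‖y‖ ^ 2 := by
  have : ‖a * (b * x + y) - x‖ ≤ 2 * ‖x‖ + ‖y‖ :=
    calc ‖a * (b * x + y) - x‖ ≤ ‖a‖ * (‖b‖ * ‖x‖ + ‖y‖) + ‖x‖ := by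
          grw [norm_sub_le, norm_mul, norm_add_le, norm_mul]
      _ ≤ 1 * (1 * ‖x‖ + ‖y‖) + ‖x‖ := by gcongr
      _ = 2 * ‖x‖ + ‖y‖ := by ring
  nlinarith [norm_nonneg (a * (b * x + y) - x), sq_nonneg (2 * ‖x‖ - ‖y‖)]

section Convergence

variable {Ω α : Type*} [MeasurableSpace Ω] {μ : Measure Ω} {h z : Ω → ℂ} {l : Filter α}
  [l.IsCountablyGenerated] {t : α → ℂ}

theorem tendsto_integral_norm_sq_norm_mul_div_norm_sub (ht : Tendsto t l (𝓝 0))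
    (hh : AEMeasurable h μ) (hz : AEMeasurable z μ) (hh2 : Integrable (fun ω => ‖h ω‖ ^ 2) μ)
    (hz0 : ∀ᵐ ω ∂μ, z ω ≠ 0) :
    Tendsto (fun b => ∫ ω, ‖(‖h ω‖ : ℂ) * ((t b * h ω + z ω) / (‖t b * h ω + z ω‖ : ℂ))
        - h ω‖ ^ 2 ∂μ) l
      (𝓝 (∫ ω, ‖(‖h ω‖ : ℂ) * (z ω / (‖z ω‖ : ℂ)) - h ω‖ ^ 2 ∂μ)) := by
  refine tendsto_integral_filter_of_dominated_convergence (fun ω => 4 * ‖h ω‖ ^ 2)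
    (.of_forall fun b => (by fun_prop : AEMeasurable _ μ).aestronglyMeasurable)
    (.of_forall fun b => ae_of_all _ fun ω => ?_) (hh2.const_mul 4) ?_
  · rw [Real.norm_of_nonneg (sq_nonneg _)]
    exact norm_sq_norm_mul_sub_le (norm_div_ofReal_norm_le_one _) _
  · filter_upwards [hz0] with ω hω
    have hs : Tendsto (fun b => t b * h ω + z ω) l (𝓝 (z ω)) := by
      simpa using (ht.mul_const (h ω)).add_const (z ω)
    have hphase : ContinuousAt (fun w : ℂ => w / (‖w‖ : ℂ)) (z ω) :=
      continuousAt_id.div (Complex.continuous_ofReal.comp continuous_norm).continuousAt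
        (by simpa using hω)
    exact (((hphase.tendsto.comp hs).const_mul _).sub_const _).norm.pow 2

theorem integral_norm_sq_norm_mul_div_norm_sub (hh : AEMeasurable h μ) (hz : AEMeasurable z μ)
    (hh2 : Integrable (fun ω => ‖h ω‖ ^ 2) μ) (hz0 : ∀ᵐ ω ∂μ, z ω ≠ 0) (hind : IndepFun h z μ)
    (hphase : ∫ ω, z ω / (‖z ω‖ : ℂ) ∂μ = 0) :
    ∫ ω, ‖(‖h ω‖ : ℂ) * (z ω / (‖z ω‖ : ℂ)) - h ω‖ ^ 2 ∂μ = 2 * ∫ ω, ‖h ω‖ ^ 2 ∂μ := by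
  have hphase_meas : Measurable fun w : ℂ => w / (‖w‖ : ℂ) := by fun_prop
  have hcross : ∫ ω, z ω / (‖z ω‖ : ℂ) * (‖h ω‖ * conj (h ω)) ∂μ = 0 := by
    rw [hind.symm.integral_fun_comp_mul_comp hz hh (f := fun w : ℂ => w / (‖w‖ : ℂ))
      (g := fun c : ℂ => ‖c‖ * conj c) hphase_meas.aestronglyMeasurable
      (by fun_prop : Measurable fun c : ℂ => (‖c‖ : ℂ) * conj c).aestronglyMeasurable,
      hphase, zero_mul]
  have hcross_int : Integrable (fun ω => z ω / (‖z ω‖ : ℂ) * (‖h ω‖ * conj (h ω))) μ := by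
    refine hh2.mono' (by fun_prop : AEMeasurable _ μ).aestronglyMeasurable
      (ae_of_all _ fun ω => ?_)
    rw [norm_mul, norm_mul, Complex.norm_real, norm_norm, Complex.norm_conj, ← sq]
    exact mul_le_of_le_one_left (sq_nonneg _) (norm_div_ofReal_norm_le_one _)
  calc ∫ ω, ‖(‖h ω‖ : ℂ) * (z ω / (‖z ω‖ : ℂ)) - h ω‖ ^ 2 ∂μ
      = ∫ ω, 2 * ‖h ω‖ ^ 2 - 2 * (z ω / (‖z ω‖ : ℂ) * (‖h ω‖ * conj (h ω))).re ∂μ :=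
        integral_congr_ae (hz0.mono fun ω hω => norm_sq_norm_mul_sub (norm_div_ofReal_norm hω) _)
    _ = 2 * ∫ ω, ‖h ω‖ ^ 2 ∂μ := by
        have hre : Integrable (fun ω => (z ω / (‖z ω‖ : ℂ) * (‖h ω‖ * conj (h ω))).re) μ :=
          hcross_int.re
        have hcross_re : ∫ ω, (z ω / (‖z ω‖ : ℂ) * (‖h ω‖ * conj (h ω))).re ∂μ = 0 :=
          (integral_re hcross_int).trans (by rw [hcross]; rfl)
        rw [integral_sub (hh2.const_mul 2) (hre.const_mul 2), integral_const_mul,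
          integral_const_mul, hcross_re, mul_zero, sub_zero]

theorem tendsto_integral_norm_sq_mul_mul_add_sub {c : α → ℂ} (ht : Tendsto t l (𝓝 0))
    (hc : Tendsto c l (𝓝 0)) (hh : AEMeasurable h μ) (hz : AEMeasurable z μ)
    (hh2 : Integrable (fun ω => ‖h ω‖ ^ 2) μ) (hz2 : Integrable (fun ω => ‖z ω‖ ^ 2) μ) :
    Tendsto (fun b => ∫ ω, ‖c b * (t b * h ω + z ω) - h ω‖ ^ 2 ∂μ) l
      (𝓝 (∫ ω, ‖h ω‖ ^ 2 ∂μ)) := by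
  refine tendsto_integral_filter_of_dominated_convergence
    (fun ω => 8 * ‖h ω‖ ^ 2 + 2 * ‖z ω‖ ^ 2)
    (.of_forall fun b => (by fun_prop : AEMeasurable _ μ).aestronglyMeasurable) ?_
    ((hh2.const_mul 8).add (hz2.const_mul 2)) (ae_of_all _ fun ω => ?_)
  · filter_upwards [hc.eventually (Metric.closedBall_mem_nhds 0 one_pos),
      ht.eventually (Metric.closedBall_mem_nhds 0 one_pos)] with b hcb htb
    refine ae_of_all _ fun ω => ?_
    rw [Real.norm_of_nonneg (sq_nonneg _)]
    exact norm_sq_mul_mul_add_sub_le (mem_closedBall_zero_iff.mp hcb)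
      (mem_closedBall_zero_iff.mp htb) _ _
  · simpa using ((hc.mul ((ht.mul_const (h ω)).add_const (z ω))).sub_const (h ω)).norm.pow 2

end Convergence

lemma tendsto_ofReal_sqrt_nhdsGT_zero :
    Tendsto (fun b : ℝ => (Real.sqrt b : ℂ)) (𝓝[>] 0) (𝓝 0) := by
  simpa using ((by fun_prop : Continuous fun b : ℝ => (Real.sqrt b : ℂ)).tendsto 0).mono_left
    nhdsWithin_le_nhds

theorem stmt10_general {Ω : Type*} [MeasurableSpace Ω] (μ : Measure Ω)
    (σ2 N0 : NNReal) (hN0 : 0 < N0)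
    (h z : Ω → ℂ) (hmeas : Measurable h) (zmeas : Measurable z)
    (hlaw : Measure.map h μ = complexGaussian σ2)
    (zlaw : Measure.map z μ = complexGaussian N0)
    (hindep : IndepFun h z μ) :
    Tendsto (fun βP : ℝ =>
        ∫ ω, ‖(‖h ω‖ : ℂ)
            * (((Real.sqrt βP : ℂ) * h ω + z ω) / (‖(Real.sqrt βP : ℂ) * h ω + z ω‖ : ℂ))
          - h ω‖ ^ 2 ∂μ)
      (nhdsWithin 0 (Set.Ioi 0)) (nhds (2 * (σ2 : ℝ))) ∧
    Tendsto (fun βP : ℝ =>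
        ∫ ω, ‖((Real.sqrt βP * σ2 / ((N0 : ℝ) + βP * σ2) : ℝ) : ℂ)
            * ((Real.sqrt βP : ℂ) * h ω + z ω)
          - h ω‖ ^ 2 ∂μ)
      (nhdsWithin 0 (Set.Ioi 0)) (nhds (σ2 : ℝ)) := by
  have hh : HasLaw h (complexGaussian σ2) μ := ⟨hmeas.aemeasurable, hlaw⟩
  have hz : HasLaw z (complexGaussian N0) μ := ⟨zmeas.aemeasurable, zlaw⟩
  have hh2 := hh.integrable_norm_sq_of_complexGaussian
  have hz0 := hz.ae_ne_zero_of_complexGaussian hN0.ne'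
  constructor
  · have := tendsto_integral_norm_sq_norm_mul_div_norm_sub tendsto_ofReal_sqrt_nhdsGT_zero
      hh.aemeasurable hz.aemeasurable hh2 hz0
    rwa [integral_norm_sq_norm_mul_div_norm_sub hh.aemeasurable hz.aemeasurable hh2 hz0 hindep
      hz.integral_div_norm_of_complexGaussian, hh.integral_norm_sq_of_complexGaussian] at this
  · have hgain : Tendsto (fun b : ℝ => ((Real.sqrt b * σ2 / ((N0 : ℝ) + b * σ2) : ℝ) : ℂ))
        (𝓝[>] 0) (𝓝 0) := by
      have : ContinuousAt (fun b : ℝ => ((Real.sqrt b * σ2 / ((N0 : ℝ) + b * σ2) : ℝ) : ℂ)) 0 := by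
        fun_prop (disch := positivity)
      simpa using this.tendsto.mono_left nhdsWithin_le_nhds
    have := tendsto_integral_norm_sq_mul_mul_add_sub tendsto_ofReal_sqrt_nhdsGT_zero hgain
      hh.aemeasurable hz.aemeasurable hh2 hz.integrable_norm_sq_of_complexGaussian
    rwa [hh.integral_norm_sq_of_complexGaussian] at this

/-- For `h ~ CN(0, σ²)`, `z ~ CN(0, N0)` independent, `s = √(βP)·h + z`, the
modulus-informed phase-projection estimator `ĥ = |h|·s/|s|` has MSE tending to `2σ²` as
`SNR = βP/N0 → 0` (here `N0` fixed, `βP → 0⁺`), whereas the classical MAP/MMSE estimator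
`ĥ₀ = (√(βP)σ²/(N0 + βPσ²))·s` has MSE tending to `σ²`: in the zero-SNR limit the
modulus-informed MAP has twice the MSE of the classical estimator. -/
theorem stmt10 {Ω : Type*} [MeasurableSpace Ω] (μ : Measure Ω) [IsProbabilityMeasure μ]
    (σ2 N0 : NNReal) (hσ2 : 0 < σ2) (hN0 : 0 < N0)
    (h z : Ω → ℂ) (hmeas : Measurable h) (zmeas : Measurable z)
    (hlaw : Measure.map h μ = complexGaussian σ2)
    (zlaw : Measure.map z μ = complexGaussian N0)
    (hindep : IndepFun h z μ) :
    Tendsto (fun βP : ℝ =>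
        ∫ ω, ‖(‖h ω‖ : ℂ)
            * (((Real.sqrt βP : ℂ) * h ω + z ω) / (‖(Real.sqrt βP : ℂ) * h ω + z ω‖ : ℂ))
          - h ω‖ ^ 2 ∂μ)
      (nhdsWithin 0 (Set.Ioi 0)) (nhds (2 * (σ2 : ℝ))) ∧
    Tendsto (fun βP : ℝ =>
        ∫ ω, ‖((Real.sqrt βP * σ2 / ((N0 : ℝ) + βP * σ2) : ℝ) : ℂ)
            * ((Real.sqrt βP : ℂ) * h ω + z ω)
          - h ω‖ ^ 2 ∂μ)
      (nhdsWithin 0 (Set.Ioi 0)) (nhds (σ2 : ℝ)) :=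
  stmt10_general μ σ2 N0 hN0 h z hmeas zmeas hlaw zlaw hindep
end

section
/- Let u ~ CN(0,1) and consider w = a + u where a > 0 is deterministic. Then as a → ∞, E[| a·(a+u)/|a+u| − a |²] → 1/2. -/
open MeasureTheory ProbabilityTheory Filter

section Stmt18Aux
open Real

lemma h0 : Tendsto (fun x : ℝ => x * Real.exp (-x^2)) atTop (nhds 0) := by
  have h := rpow_mul_exp_neg_mul_sq_isLittleO_exp_neg (b := 1) one_pos 1
  have hg : Tendsto (fun x : ℝ => Real.exp (-(1/2) * x)) atTop (nhds 0) :=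
    Real.tendsto_exp_atBot.comp <| tendsto_id.const_mul_atTop_of_neg (neg_lt_zero.mpr one_half_pos)
  have := h.trans_tendsto hg
  refine this.congr' ?_
  filter_upwards [eventually_gt_atTop (0:ℝ)] with x hx
  rw [Real.rpow_one]; ring_nf

lemma int1 : Integrable (fun x : ℝ => x^2 * Real.exp (-x^2)) := by
  have h := integrable_rpow_mul_exp_neg_mul_sq (b := 1) one_pos (s := 2) (by norm_num)
  have e : (fun x : ℝ => x ^ (2:ℝ) * Real.exp (-1 * x^2)) = fun x : ℝ => x^2 * Real.exp (-x^2) := by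
    funext x
    rw [show (2:ℝ) = ((2:ℕ):ℝ) by norm_num, Real.rpow_natCast]; ring_nf
  exact e ▸ h

lemma int_x2_exp : ∫ x : ℝ, x^2 * Real.exp (-x^2) = Real.sqrt π / 2 := by
  have int2 : Integrable (fun x : ℝ => Real.exp (-x^2)) := by
    simpa using integrable_exp_neg_mul_sq (b := 1) one_pos
  have hderiv : ∀ x : ℝ, HasDerivAt (fun x : ℝ => -(x/2) * Real.exp (-x^2))
      (x^2 * Real.exp (-x^2) - Real.exp (-x^2)/2) x := by
    intro x
    have h1 : HasDerivAt (fun x : ℝ => -x^2) (-(2*x)) x := by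
      simpa using (hasDerivAt_pow 2 x).fun_neg
    have h2 := h1.exp
    have h3 : HasDerivAt (fun x : ℝ => -(x/2)) (-(1/2)) x := by
      simpa using (hasDerivAt_id x).div_const 2 |>.fun_neg
    have := h3.fun_mul h2
    exact this.congr_deriv (by ring)
  have htop : Tendsto (fun x : ℝ => -(x/2) * Real.exp (-x^2)) atTop (nhds 0) := by
    have := h0.const_mul (-(1/2) : ℝ)
    simpa [mul_comm, mul_assoc, mul_left_comm] using this.congr (fun x => by ring)
  have hbot : Tendsto (fun x : ℝ => -(x/2) * Real.exp (-x^2)) atBot (nhds 0) := by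
    have := (h0.const_mul ((1/2) : ℝ)).comp tendsto_neg_atBot_atTop
    simpa using this.congr (fun x => by simp [Function.comp]; ring)
  have key := integral_of_hasDerivAt_of_tendsto hderiv (int1.sub (int2.div_const 2)) hbot htop
  rw [integral_sub int1 (int2.div_const 2), integral_div] at key
  have hg : ∫ x : ℝ, Real.exp (-x^2) = Real.sqrt π := by
    simpa using integral_gaussian 1
  rw [hg] at key
  linarith

lemma pdf_eq : ∀ x : ℝ, gaussianPDFReal 0 (1/2 : NNReal) x = (Real.sqrt π)⁻¹ * Real.exp (-x^2) := by
  intro x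
  rw [gaussianPDFReal]
  norm_num
  have h2 : Real.sqrt 2 ≠ 0 := by positivity
  field_simp

lemma gauss_density : gaussianReal 0 (1/2 : NNReal)
    = volume.withDensity (fun x => ENNReal.ofReal ((Real.sqrt π)⁻¹ * Real.exp (-x^2))) := by
  rw [gaussianReal_of_var_ne_zero 0 (by norm_num : (1/2 : NNReal) ≠ 0)]
  congr 1
  funext x
  rw [show gaussianPDF 0 (1/2 : NNReal) x = ENNReal.ofReal (gaussianPDFReal 0 (1/2 : NNReal) x)
    from rfl, pdf_eq]

lemma gauss_sq_integrable : Integrable (fun x : ℝ => x^2) (gaussianReal 0 (1/2 : NNReal)) := by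
  rw [gauss_density, integrable_withDensity_iff (by measurability)
    (Filter.Eventually.of_forall fun x => ENNReal.ofReal_lt_top)]
  have : Integrable (fun x : ℝ => (Real.sqrt π)⁻¹ * (x^2 * Real.exp (-x^2))) := int1.const_mul _
  refine this.congr (Filter.Eventually.of_forall fun x => ?_)
  show (Real.sqrt π)⁻¹ * (x^2 * Real.exp (-x^2)) = x^2 * (ENNReal.ofReal _).toReal
  rw [ENNReal.toReal_ofReal (by positivity)]
  ring

lemma gauss_sq_int : ∫ x : ℝ, x^2 ∂(gaussianReal 0 (1/2 : NNReal)) = 1/2 := by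
  rw [gauss_density]
  have hmeas : Measurable (fun x : ℝ => ((Real.sqrt π)⁻¹ * Real.exp (-x^2)).toNNReal) := by
    measurability
  have he : (fun x : ℝ => ENNReal.ofReal ((Real.sqrt π)⁻¹ * Real.exp (-x^2)))
      = fun x => (((Real.sqrt π)⁻¹ * Real.exp (-x^2)).toNNReal : ENNReal) := rfl
  rw [he, integral_withDensity_eq_integral_smul hmeas]
  have : ∀ x : ℝ, ((Real.sqrt π)⁻¹ * Real.exp (-x^2)).toNNReal • (x^2)
      = (Real.sqrt π)⁻¹ * (x^2 * Real.exp (-x^2)) := by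
    intro x
    rw [NNReal.smul_def, Real.coe_toNNReal _ (by positivity), smul_eq_mul]
    ring
  rw [funext this, integral_const_mul, int_x2_exp]
  have hπ : (0:ℝ) < Real.sqrt π := Real.sqrt_pos.mpr Real.pi_pos
  field_simp

-- |a*(w/|w|) - a|^2 = 2a^2(1 - Re w/|w|)
lemma abs_proj (a : ℝ) (w : ℂ) (hw : w ≠ 0) :
    ‖(a : ℂ) * (w / (‖w‖ : ℂ)) - (a : ℂ)‖ ^ 2
      = 2 * a^2 * (1 - w.re / ‖w‖) := by
  set r := ‖w‖ with hr
  have hr0 : 0 < r := norm_pos_iff.mpr hw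
  have hrC : (r : ℂ) ≠ 0 := by exact_mod_cast hr0.ne'
  have h1 : (a : ℂ) * (w / (r : ℂ)) - (a : ℂ) = (a : ℂ) * (w - (r : ℂ)) / (r : ℂ) := by
    field_simp
  rw [h1, norm_div, norm_mul, Complex.norm_real, Complex.norm_real, Real.norm_eq_abs, Real.norm_eq_abs, abs_of_pos hr0]
  have h2 : ‖w - (r : ℂ)‖ ^ 2 = 2 * r ^ 2 - 2 * r * w.re := by
    rw [Complex.sq_norm, Complex.normSq_apply]
    have hsq : w.re * w.re + w.im * w.im = r ^ 2 := by
      rw [hr, Complex.sq_norm, Complex.normSq_apply]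
    simp only [Complex.sub_re, Complex.sub_im, Complex.ofReal_re, Complex.ofReal_im]
    nlinarith
  rw [div_pow, mul_pow, h2, sq_abs]
  field_simp

lemma tangent (r xr y : ℝ) (hr : 0 < r) (hsum : 0 < r + xr) (hsq : r^2 = xr^2 + y^2) :
    1 - xr / r = y^2 / (r * (r + xr)) := by
  field_simp
  nlinarith

lemma wre (a : ℝ) (u0 : ℂ) : ((a : ℂ) + u0).re = a + u0.re := by simp
lemma wim (a : ℝ) (u0 : ℂ) : ((a : ℂ) + u0).im = u0.im := by simp

lemma rsq (w : ℂ) : ‖w‖ ^ 2 = w.re ^ 2 + w.im ^ 2 := by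
  rw [Complex.sq_norm, Complex.normSq_apply]; ring

lemma bound_lemma (u0 : ℂ) (a : ℝ) (ha : 1 ≤ a) :
    ‖(a : ℂ) * (((a : ℂ) + u0) / (‖(a : ℂ) + u0‖ : ℂ)) - (a : ℂ)‖ ^ 2
      ≤ 16 * u0.re ^ 2 + 4 * u0.im ^ 2 := by
  have h0a : (0:ℝ) < a := lt_of_lt_of_le one_pos ha
  set x := u0.re with hx
  set y := u0.im with hy
  by_cases hw : (a : ℂ) + u0 = 0
  · have hxa : x = -a := by
      have := congrArg Complex.re hw
      simp [wre] at this
      linarith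
    rw [hw]
    simp only [norm_zero, Complex.ofReal_zero, div_zero, mul_zero, zero_sub, norm_neg,
      Complex.norm_real, Real.norm_eq_abs]
    rw [sq_abs]
    nlinarith [sq_nonneg y, sq_nonneg a]
  · rw [abs_proj a _ hw]
    set w := (a : ℂ) + u0 with hwdef
    set r := ‖w‖ with hr
    have hr0 : 0 < r := norm_pos_iff.mpr hw
    have hrsq : r ^ 2 = w.re ^ 2 + w.im ^ 2 := rsq w
    have hrele : w.re ≤ r := Complex.re_le_norm w
    have habsre : |w.re| ≤ r := Complex.abs_re_le_norm w
    have hwre' : w.re = a + x := wre a u0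
    have hwim' : w.im = y := wim a u0
    by_cases hcase : a / 2 ≤ a + x
    · have hsum : 0 < r + w.re := by rw [hwre']; nlinarith
      rw [tangent r w.re w.im hr0 hsum hrsq]
      have hD : 0 < r * (r + w.re) := by positivity
      have hden : a ^ 2 / 2 ≤ r * (r + w.re) := by rw [hwre'] at hrele hsum ⊢; nlinarith
      rw [mul_div_assoc' , div_le_iff₀ hD]
      rw [hwim']
      nlinarith [sq_nonneg y, sq_nonneg x, sq_nonneg a]
    · have hxneg : x < -(a / 2) := by linarith
      have hge : -r ≤ w.re := (abs_le.mp habsre).1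
      have hrat : (-1 : ℝ) ≤ w.re / r := by
        rw [le_div_iff₀ hr0]; linarith
      have h1 : 2 * a ^ 2 * (1 - w.re / r) ≤ 4 * a ^ 2 := by nlinarith [sq_nonneg a]
      have h2 : 4 * a ^ 2 ≤ 16 * x ^ 2 := by nlinarith
      nlinarith [sq_nonneg y]

lemma abs_form (u0 : ℂ) (a : ℝ) :
    ‖(a : ℂ) + u0‖ = Real.sqrt ((a + u0.re) ^ 2 + u0.im ^ 2) := by
  rw [Complex.norm_def, Complex.normSq_apply]
  rw [wre, wim]
  congr 1
  ring

lemma lim_lemma (u0 : ℂ) :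
    Tendsto (fun a : ℝ => ‖(a : ℂ) * (((a : ℂ) + u0)
        / (‖(a : ℂ) + u0‖ : ℂ)) - (a : ℂ)‖ ^ 2) atTop (nhds (u0.im ^ 2)) := by
  set x := u0.re with hx
  set y := u0.im with hy
  have hx0 : Tendsto (fun a : ℝ => x / a) atTop (nhds 0) :=
    tendsto_const_nhds.div_atTop tendsto_id
  have hy0 : Tendsto (fun a : ℝ => y / a) atTop (nhds 0) :=
    tendsto_const_nhds.div_atTop tendsto_id
  have hG : Tendsto (fun a : ℝ => ‖(a : ℂ) + u0‖ / a) atTop (nhds 1) := by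
    have hinner : Tendsto (fun a : ℝ => (1 + x / a) ^ 2 + (y / a) ^ 2) atTop
        (nhds ((1 + 0) ^ 2 + 0 ^ 2)) :=
      ((tendsto_const_nhds.add hx0).pow 2).add (hy0.pow 2)
    have hs : Tendsto (fun a : ℝ => Real.sqrt ((1 + x / a) ^ 2 + (y / a) ^ 2)) atTop
        (nhds (Real.sqrt ((1 + 0) ^ 2 + 0 ^ 2))) :=
      (Real.continuous_sqrt.tendsto _).comp hinner
    have hval : Real.sqrt (((1:ℝ) + 0) ^ 2 + 0 ^ 2) = 1 := by norm_num
    rw [hval] at hs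
    refine hs.congr' ?_
    filter_upwards [eventually_gt_atTop (0:ℝ)] with a ha
    rw [abs_form]
    have heq : ((a + x) ^ 2 + y ^ 2) = a ^ 2 * ((1 + x / a) ^ 2 + (y / a) ^ 2) := by
      field_simp
    rw [← hx, heq, Real.sqrt_mul (sq_nonneg a), Real.sqrt_sq ha.le]
    field_simp
  have main : Tendsto (fun a : ℝ => 2 * y ^ 2 / ((‖(a : ℂ) + u0‖ / a)
      * ((‖(a : ℂ) + u0‖ / a) + (1 + x / a)))) atTop
      (nhds (2 * y ^ 2 / (1 * (1 + (1 + 0))))) := by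
    refine Tendsto.div tendsto_const_nhds (hG.mul (hG.add (tendsto_const_nhds.add hx0))) ?_
    norm_num
  have hval2 : 2 * y ^ 2 / (1 * (1 + (1 + 0))) = y ^ 2 := by norm_num
  rw [hval2] at main
  refine main.congr' ?_
  filter_upwards [eventually_gt_atTop (0:ℝ), eventually_gt_atTop (-x)] with a ha hax
  have haxx : 0 < a + x := by linarith
  set w := (a : ℂ) + u0 with hwdef
  have hwre' : w.re = a + x := wre a u0
  have hwim' : w.im = y := wim a u0
  have hw : w ≠ 0 := by
    intro h
    rw [h] at hwre'
    simp at hwre'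
    linarith
  set r := ‖w‖ with hr
  have hr0 : 0 < r := norm_pos_iff.mpr hw
  have hrsq : r ^ 2 = w.re ^ 2 + w.im ^ 2 := rsq w
  have hsum : 0 < r + w.re := by
    have := Complex.re_le_norm w
    rw [hwre'] at *
    nlinarith [Complex.abs_re_le_norm w, abs_nonneg w.re]
  rw [abs_proj a w hw, ← hr, tangent r w.re w.im hr0 hsum hrsq, hwre', hwim']
  have hden : (r / a) * ((r / a) + (1 + x / a)) = (r * (r + (a + x))) / a ^ 2 := by
    field_simp
  rw [hden]
  rw [div_div_eq_mul_div]
  have hDpos : 0 < r * (r + (a + x)) := by nlinarith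
  field_simp

lemma emb_meas : Measurable (fun p : ℝ × ℝ => (p.1 : ℂ) + (p.2 : ℂ) * Complex.I) :=
  (Complex.measurable_ofReal.comp measurable_fst).add
    ((Complex.measurable_ofReal.comp measurable_snd).mul measurable_const)

end Stmt18Aux

/-- Let `u ~ CN(0, 1)` (standard circularly symmetric complex Gaussian, real
and imaginary parts i.i.d. `N(0, 1/2)`), and for deterministic `a > 0` let `w = a + u` and
project `w` to the circle of radius `a`: `ĥ = a·w/|w|`. Then
`lim_{a→∞} E[|ĥ − a|²] = 1/2` — the phase-projection error captures only the tangential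
half of the noise variance `E[|u|²] = 1` in the high-SNR limit. -/
theorem stmt18 {Ω : Type*} [MeasurableSpace Ω] (μ : Measure Ω) [IsProbabilityMeasure μ]
    (u : Ω → ℂ) (umeas : Measurable u)
    (ulaw : Measure.map u μ = complexGaussian 1) :
    Tendsto (fun a : ℝ =>
        ∫ ω, ‖(a : ℂ) * (((a : ℂ) + u ω) / (‖(a : ℂ) + u ω‖ : ℂ))
          - (a : ℂ)‖ ^ 2 ∂μ)
      atTop (nhds (1 / 2)) := by
  have him_law : Measure.map (fun ω => (u ω).im) μ = gaussianReal 0 (1/2 : NNReal) := by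
    rw [show (fun ω => (u ω).im) = Complex.im ∘ u from rfl,
      ← Measure.map_map Complex.measurable_im umeas, ulaw]
    unfold complexGaussian
    rw [Measure.map_map Complex.measurable_im emb_meas]
    rw [show (Complex.im ∘ fun p : ℝ × ℝ => (p.1 : ℂ) + (p.2 : ℂ) * Complex.I)
      = Prod.snd from funext fun p => by simp [Function.comp]]
    rw [Measure.map_snd_prod]
    simp
  have hre_law : Measure.map (fun ω => (u ω).re) μ = gaussianReal 0 (1/2 : NNReal) := by
    rw [show (fun ω => (u ω).re) = Complex.re ∘ u from rfl,
      ← Measure.map_map Complex.measurable_re umeas, ulaw]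
    unfold complexGaussian
    rw [Measure.map_map Complex.measurable_re emb_meas]
    rw [show (Complex.re ∘ fun p : ℝ × ℝ => (p.1 : ℂ) + (p.2 : ℂ) * Complex.I)
      = Prod.fst from funext fun p => by simp [Function.comp]]
    rw [Measure.map_fst_prod]
    simp
  have hsq_meas : AEStronglyMeasurable (fun t : ℝ => t ^ 2)
      (gaussianReal 0 (1/2 : NNReal)) := (measurable_id.pow_const 2).aestronglyMeasurable
  have him_int : Integrable (fun ω => (u ω).im ^ 2) μ := by
    have h := gauss_sq_integrable
    rw [← him_law] at h
    exact (integrable_map_measure (by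
        show AEStronglyMeasurable (fun x : ℝ => x ^ 2) (Measure.map (fun ω => (u ω).im) μ)
        rw [him_law]; exact hsq_meas)
      (Complex.measurable_im.comp umeas).aemeasurable).mp h
  have hre_int : Integrable (fun ω => (u ω).re ^ 2) μ := by
    have h := gauss_sq_integrable
    rw [← hre_law] at h
    exact (integrable_map_measure (by
        show AEStronglyMeasurable (fun x : ℝ => x ^ 2) (Measure.map (fun ω => (u ω).re) μ)
        rw [hre_law]; exact hsq_meas)
      (Complex.measurable_re.comp umeas).aemeasurable).mp h
  have hbound_int : Integrable (fun ω => 16 * (u ω).re ^ 2 + 4 * (u ω).im ^ 2) μ :=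
    (hre_int.const_mul 16).add (him_int.const_mul 4)
  have hval : ∫ ω, (u ω).im ^ 2 ∂μ = 1 / 2 := by
    have := integral_map (Complex.measurable_im.comp umeas).aemeasurable
      (f := fun t : ℝ => t ^ 2) (by
        show AEStronglyMeasurable (fun x : ℝ => x ^ 2) (Measure.map (fun ω => (u ω).im) μ)
        rw [him_law]; exact hsq_meas)
    rw [show Measure.map (Complex.im ∘ u) μ = gaussianReal 0 (1/2 : NNReal) from him_law,
      gauss_sq_int] at this
    exact this.symm
  rw [show (1:ℝ) / 2 = ∫ ω, (u ω).im ^ 2 ∂μ from hval.symm]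
  refine tendsto_integral_filter_of_dominated_convergence
    (fun ω => 16 * (u ω).re ^ 2 + 4 * (u ω).im ^ 2) ?_ ?_ hbound_int ?_
  · filter_upwards with a
    have m1 : Measurable fun ω => (a : ℂ) + u ω := measurable_const.add umeas
    have m2 : Measurable fun ω => ((‖(a : ℂ) + u ω‖ : ℝ) : ℂ) :=
      Complex.measurable_ofReal.comp (continuous_norm.measurable.comp m1)
    have m3 : Measurable fun ω => ((a : ℂ) + u ω) / ((‖(a : ℂ) + u ω‖ : ℝ) : ℂ) :=
      m1.div m2
    have m4 : Measurable fun ω =>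
        (a : ℂ) * (((a : ℂ) + u ω) / ((‖(a : ℂ) + u ω‖ : ℝ) : ℂ)) - (a : ℂ) :=
      (measurable_const.mul m3).sub measurable_const
    exact ((continuous_norm.measurable.comp m4).pow_const 2).aestronglyMeasurable
  · filter_upwards [eventually_ge_atTop (1:ℝ)] with a ha
    refine Eventually.of_forall fun ω => ?_
    rw [Real.norm_eq_abs, abs_of_nonneg (by positivity)]
    exact bound_lemma (u ω) a ha
  · exact Eventually.of_forall fun ω => lim_lemma (u ω)
end
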